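/- arXiv:math/0003161 — 2 statements merged into one kernel-verified Lean document; each statement's English description precedes it below -/
import Mathlib

section
/- Fix integers n ≥ 1 and l ≥ 1, and for k ∈ ℤ let i_k be the unique element of {0,1,…,n} with i_k ≡ −k (mod n+1). There exists a constant C (depending only on n and l) such that for every M ≥ 1 and every pair (y, v) ∈ B_l × B_M with v_{n+1} ≥ v_b + C for all 1 ≤ b ≤ n, the following holds: defining y^(k) ⊗ v^(k) = ẽ^max_{i_k} ⋯ ẽ^max_{i_1}(y ⊗ v) in B_l ⊗ B_M for 0 ≤ k ≤ n (with ẽ^max_{i_1} applied first, and ẽ^max_i w = ẽ_i^{ε_i(w)} w computed with the tensor product operators), one has t(σ v^(n)) = t(y), where σ(x_1,…,x_{n+1}) = (x_2,…,x_{n+1},x_1) and t(x_1,…,x_{n+1}) = (x_n, x_{n−1},…,x_1). -/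
/-- Iterated application of a partial map: `OptIter g m a` is `g^m a`. -/
def OptIter {α : Type} (g : α → Option α) : ℕ → α → Option α
  | 0, a => some a
  | m + 1, a => (g a).bind (OptIter g m)

/-- Apply the partial maps `g 1`, `g 2`, ..., `g m` in this order. -/
def ChainOpt {α : Type} (g : ℕ → α → Option α) (m : ℕ) (a : α) : Option α :=
  (List.range m).foldl (fun acc j => acc.bind (g (j + 1))) (some a)

/-- A set with partial Kashiwara-type operators indexed by `{0, 1, ..., n}`. -/
structure PreCrystal (n : ℕ) where
  carrier : Type
  e : Fin (n + 1) → carrier → Option carrier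
  f : Fin (n + 1) → carrier → Option carrier

namespace PreCrystal

variable {n : ℕ}

/-- `ε_i(b) = max {m ≥ 0 : ẽ_i^m b is defined}`. -/
noncomputable def eps (C : PreCrystal n) (i : Fin (n + 1)) (b : C.carrier) : ℕ :=
  sSup {m | OptIter (C.e i) m b ≠ none}

/-- `φ_i(b) = max {m ≥ 0 : f̃_i^m b is defined}`. -/
noncomputable def phi (C : PreCrystal n) (i : Fin (n + 1)) (b : C.carrier) : ℕ :=
  sSup {m | OptIter (C.f i) m b ≠ none}

/-- `ẽ_i^max b = ẽ_i^{ε_i(b)} b`. -/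
noncomputable def eMax (C : PreCrystal n) (i : Fin (n + 1)) (b : C.carrier) : Option C.carrier :=
  OptIter (C.e i) (C.eps i b) b

/-- The Weyl group operator `S_i`: `f̃_i^{φ_i(b)-ε_i(b)} b` if `φ_i(b) ≥ ε_i(b)`,
and `ẽ_i^{ε_i(b)-φ_i(b)} b` if `φ_i(b) ≤ ε_i(b)`. -/
noncomputable def S (C : PreCrystal n) (i : Fin (n + 1)) (b : C.carrier) : Option C.carrier :=
  if C.eps i b ≤ C.phi i b then OptIter (C.f i) (C.phi i b - C.eps i b) b
  else OptIter (C.e i) (C.eps i b - C.phi i b) b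

/-- The tensor product `C ⊗ D` of two crystals, with the Kashiwara tensor product rule. -/
noncomputable def tensor (C D : PreCrystal n) : PreCrystal n where
  carrier := C.carrier × D.carrier
  e := fun i p =>
    if D.eps i p.2 ≤ C.phi i p.1 then (C.e i p.1).map (fun b => (b, p.2))
    else (D.e i p.2).map (fun b => (p.1, b))
  f := fun i p =>
    if D.eps i p.2 < C.phi i p.1 then (C.f i p.1).map (fun b => (b, p.2))
    else (D.f i p.2).map (fun b => (p.1, b))

end PreCrystal

/-- Kashiwara raising operator `ẽ_i` of type `A_n^{(1)}` on `(n+1)`-tuples of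
nonnegative integers (zero-indexed: coordinate `j` is `x_{j+1}`): defined iff the
coordinate at index `i` is positive, it adds 1 at index `i-1` (cyclically) and
subtracts 1 at index `i`. -/
def eA (n : ℕ) (i : Fin (n + 1)) (x : Fin (n + 1) → ℕ) : Option (Fin (n + 1) → ℕ) :=
  if 0 < x i then
    some (Function.update (Function.update x (i - 1) (x (i - 1) + 1)) i (x i - 1))
  else none

/-- Kashiwara lowering operator `f̃_i` of type `A_n^{(1)}`: defined iff the coordinate
at index `i-1` is positive, it subtracts 1 at index `i-1` and adds 1 at index `i`. -/
def fA (n : ℕ) (i : Fin (n + 1)) (x : Fin (n + 1) → ℕ) : Option (Fin (n + 1) → ℕ) :=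
  if 0 < x (i - 1) then
    some (Function.update (Function.update x i (x i + 1)) (i - 1) (x (i - 1) - 1))
  else none

/-- The crystal operators of type `A_n^{(1)}` on all `(n+1)`-tuples; the crystal `B_l`
is the subset of tuples with coordinate sum `l`. -/
def BA (n : ℕ) : PreCrystal n where
  carrier := Fin (n + 1) → ℕ
  e := eA n
  f := fA n

/-- The unique element of `{0, ..., n}` congruent to `-k` modulo `n+1`. -/
def negIdx (n : ℕ) (k : ℤ) : Fin (n + 1) :=
  ⟨((-k) % ((n : ℤ) + 1)).toNat, by
    have h1 := Int.emod_nonneg (-k) (by omega : ((n : ℤ) + 1) ≠ 0)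
    have h2 := Int.emod_lt_of_pos (-k) (by omega : (0 : ℤ) < (n : ℤ) + 1)
    omega⟩

/-- The cyclic shift `σ : (x_1, ..., x_{n+1}) ↦ (x_2, ..., x_{n+1}, x_1)`. -/
def shiftA (n : ℕ) (x : Fin (n + 1) → ℕ) : Fin (n + 1) → ℕ := fun j => x (j + 1)

/-- The map `t(x_1, ..., x_{n+1}) = (x_n, x_{n-1}, ..., x_1)`. -/
def tA (n : ℕ) (x : Fin (n + 1) → ℕ) : Fin n → ℕ :=
  fun k => x ⟨n - 1 - (k : ℕ), by omega⟩

/-- The `(N+1)`-fold tensor power `B ⊗ ... ⊗ B`, associated to the left. -/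
noncomputable def BPow (n : ℕ) : ℕ → PreCrystal n
  | 0 => BA n
  | N + 1 => (BPow n N).tensor (BA n)

/-- The element `b_1 ⊗ ... ⊗ b_{N+1}` of the `(N+1)`-fold tensor power. -/
noncomputable def tensorOf (n : ℕ) : (N : ℕ) → (Fin (N + 1) → (Fin (n + 1) → ℕ)) → (BPow n N).carrier
  | 0, b => b 0
  | N + 1, b => (tensorOf n N (fun j => b j.castSucc), b (Fin.last (N + 1)))

/-- Membership in `B_{l_1} ⊗ ... ⊗ B_{l_{N+1}}`: each factor has coordinate sum `l_j`. -/
def memBPow (n : ℕ) : (N : ℕ) → (Fin (N + 1) → ℕ) → (BPow n N).carrier → Prop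
  | 0, l, x => ∑ j, x j = l 0
  | N + 1, l, p => memBPow n N (fun j => l j.castSucc) p.1 ∧ ∑ j, p.2 j = l (Fin.last (N + 1))

/-- The componentwise cyclic shift `σ_B = σ ⊗ ... ⊗ σ` on a tensor power. -/
noncomputable def shiftPow (n : ℕ) : (N : ℕ) → (BPow n N).carrier → (BPow n N).carrier
  | 0, x => shiftA n x
  | N + 1, p => (shiftPow n N p.1, shiftA n p.2)

/-!
Take `C = l` and index coordinates from `0`, so that `ẽ_i` moves a unit from coordinate `i` to
coordinate `i - 1` and the operators applied are `ẽ_n, ẽ_{n-1}, …, ẽ_1`.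
When `x_{i-1} ≤ w_i`, the signature rule makes `ẽ^max_i (x ⊗ w)` first move `w_i - x_{i-1}` units
of `w` from `i` to `i - 1` and then all `x_i` units of `x`; afterwards `w_i = x_{i-1}`, while the
new `w_{i-1}` is at least `w_i - x_{i-1}`. Since `x_{i-1} = y_{i-1}` still holds at that moment, the
bound `w_i ≥ y_0 + ⋯ + y_{i-1}` propagates from `i` to `i - 1`, and it holds at the start because
`v_n ≥ v_0 + l ≥ l`. So every step is of this form, and at the end `w_j = y_{j-1}` for `j ≥ 1`,
which is `t(σ w) = t(y)`.
-/

section PartialMaps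

variable {α : Type}

theorem OptIter_add (g : α → Option α) (m m' : ℕ) (a : α) :
    OptIter g (m + m') a = (OptIter g m a).bind (OptIter g m') := by
  induction m generalizing a with
  | zero => rw [Nat.zero_add]; rfl
  | succ m ih =>
    rw [Nat.add_right_comm]
    cases h : g a <;> simp [OptIter, h, ih]

theorem OptIter_eq_some_of_path (g : α → Option α) (F : ℕ → α) (m : ℕ)
    (h : ∀ k < m, g (F k) = some (F (k + 1))) : OptIter g m (F 0) = some (F m) := by
  induction m generalizing F with
  | zero => rfl
  | succ m ih =>
    rw [OptIter, h 0 m.succ_pos, Option.bind_some]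
    exact ih (fun k => F (k + 1)) fun k hk => h (k + 1) (by omega)

theorem OptIter_ne_none_iff_of_counter (g : α → Option α) (c : α → ℕ)
    (hnone : ∀ a, g a = none ↔ c a = 0) (hstep : ∀ a b, g a = some b → c b + 1 = c a)
    (m : ℕ) (a : α) : OptIter g m a ≠ none ↔ m ≤ c a := by
  induction m generalizing a with
  | zero => simp [OptIter]
  | succ m ih =>
    rw [OptIter]
    cases h : g a with
    | none => simp [(hnone a).1 h]
    | some b => rw [Option.bind_some, ih, ← hstep a b h]; omega

theorem sSup_OptIter_ne_none_of_counter (g : α → Option α) (c : α → ℕ)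
    (hnone : ∀ a, g a = none ↔ c a = 0) (hstep : ∀ a b, g a = some b → c b + 1 = c a)
    (a : α) : sSup {m | OptIter g m a ≠ none} = c a := by
  simp_rw [OptIter_ne_none_iff_of_counter g c hnone hstep]
  exact csSup_Iic

theorem ChainOpt_succ (g : ℕ → α → Option α) (m : ℕ) (a : α) :
    ChainOpt g (m + 1) a = (ChainOpt g m a).bind (g (m + 1)) := by
  rw [ChainOpt, List.range_succ, List.foldl_append]
  rfl

end PartialMaps

section TypeA

variable {n : ℕ}

def transfer (i j : Fin (n + 1)) (m : ℕ) (x : Fin (n + 1) → ℕ) : Fin (n + 1) → ℕ :=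
  Function.update (Function.update x j (x j + m)) i (x i - m)

@[simp]
theorem transfer_apply_self (i j : Fin (n + 1)) (m : ℕ) (x : Fin (n + 1) → ℕ) :
    transfer i j m x i = x i - m := by
  simp [transfer]

@[simp]
theorem transfer_apply_right {i j : Fin (n + 1)} (h : i ≠ j) (m : ℕ) (x : Fin (n + 1) → ℕ) :
    transfer i j m x j = x j + m := by
  simp [transfer, h.symm]

theorem transfer_apply_of_ne {i j k : Fin (n + 1)} (hi : k ≠ i) (hj : k ≠ j) (m : ℕ)
    (x : Fin (n + 1) → ℕ) : transfer i j m x k = x k := by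
  simp [transfer, hi, hj]

@[simp]
theorem transfer_zero (i j : Fin (n + 1)) (x : Fin (n + 1) → ℕ) : transfer i j 0 x = x := by
  simp [transfer]

theorem transfer_transfer {i j : Fin (n + 1)} (h : i ≠ j) (m m' : ℕ) (x : Fin (n + 1) → ℕ) :
    transfer i j m' (transfer i j m x) = transfer i j (m + m') x := by
  funext k
  by_cases hi : k = i
  · subst hi; simp [Nat.sub_add_eq]
  by_cases hj : k = j
  · subst hj; simp [h, add_assoc]
  · simp [transfer_apply_of_ne hi hj]

theorem eA_eq (i : Fin (n + 1)) (x : Fin (n + 1) → ℕ) :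
    eA n i x = if 0 < x i then some (transfer i (i - 1) 1 x) else none := rfl

theorem fA_eq (i : Fin (n + 1)) (x : Fin (n + 1) → ℕ) :
    fA n i x = if 0 < x (i - 1) then some (transfer (i - 1) i 1 x) else none := rfl

theorem eps_BA (i : Fin (n + 1)) (x : Fin (n + 1) → ℕ) : (BA n).eps i x = x i := by
  refine sSup_OptIter_ne_none_of_counter (eA n i) (fun x => x i) (fun x => ?_) (fun x b h => ?_) x
  · rw [eA_eq]; split_ifs <;> simp only [false_iff, true_iff] <;> omega
  · rw [eA_eq] at h; split_ifs at h; cases h; rw [transfer_apply_self]; omega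

theorem phi_BA (i : Fin (n + 1)) (x : Fin (n + 1) → ℕ) : (BA n).phi i x = x (i - 1) := by
  refine sSup_OptIter_ne_none_of_counter (fA n i) (fun x => x (i - 1)) (fun x => ?_)
    (fun x b h => ?_) x
  · rw [fA_eq]; split_ifs <;> simp only [false_iff, true_iff] <;> omega
  · rw [fA_eq] at h; split_ifs at h; cases h; rw [transfer_apply_self]; omega

end TypeA

section Tensor

variable {n : ℕ} (i : Fin (n + 1)) (x w : Fin (n + 1) → ℕ)

theorem tensor_e_BA :
    ((BA n).tensor (BA n)).e i ((x, w) : (Fin (n + 1) → ℕ) × (Fin (n + 1) → ℕ)) =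
      if w i ≤ x (i - 1) then (eA n i x).map (·, w) else (eA n i w).map (x, ·) := by
  show (if (BA n).eps i w ≤ (BA n).phi i x then _ else _) = _
  rw [eps_BA, phi_BA]
  rfl

theorem eps_tensor_BA (hi : i - 1 ≠ i) :
    ((BA n).tensor (BA n)).eps i ((x, w) : (Fin (n + 1) → ℕ) × (Fin (n + 1) → ℕ)) =
      (w i - x (i - 1)) + x i := by
  refine sSup_OptIter_ne_none_of_counter (α := (Fin (n + 1) → ℕ) × (Fin (n + 1) → ℕ))
    (((BA n).tensor (BA n)).e i) (fun p => (p.2 i - p.1 (i - 1)) + p.1 i) (fun p => ?_)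
    (fun p q h => ?_) (x, w)
  · obtain ⟨x, w⟩ := p
    rw [tensor_e_BA, eA_eq, eA_eq]
    split_ifs <;>
      simp only [Option.map_some, Option.map_none, reduceCtorEq, false_iff, true_iff] <;> omega
  · obtain ⟨x, w⟩ := p
    rw [tensor_e_BA, eA_eq, eA_eq] at h
    split_ifs at h <;> cases h <;>
      simp only [transfer_apply_self, transfer_apply_right hi.symm] <;> omega

theorem eMax_tensor_BA (hi : i - 1 ≠ i) (h : x (i - 1) ≤ w i) :
    ((BA n).tensor (BA n)).eMax i ((x, w) : (Fin (n + 1) → ℕ) × (Fin (n + 1) → ℕ)) =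
      some (transfer i (i - 1) (x i) x, transfer i (i - 1) (w i - x (i - 1)) w) := by
  unfold PreCrystal.eMax
  -- `erw`: the carrier of `(BA n).tensor (BA n)` is a product type only up to unfolding `tensor`.
  erw [eps_tensor_BA i x w hi, OptIter_add]
  have hlow := OptIter_eq_some_of_path (((BA n).tensor (BA n)).e i)
    (fun k => (x, transfer i (i - 1) k w)) (w i - x (i - 1)) fun k hk => by
      erw [tensor_e_BA, if_neg (by rw [transfer_apply_self]; omega), eA_eq,
        if_pos (by rw [transfer_apply_self]; omega)]
      simp only [Option.map_some, transfer_transfer hi.symm]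
      rfl
  have hhigh := OptIter_eq_some_of_path (((BA n).tensor (BA n)).e i)
    (fun k => (transfer i (i - 1) k x, transfer i (i - 1) (w i - x (i - 1)) w)) (x i)
    fun k hk => by
      erw [tensor_e_BA,
        if_pos (by rw [transfer_apply_self, transfer_apply_right hi.symm]; omega), eA_eq,
        if_pos (by rw [transfer_apply_self]; omega)]
      simp only [Option.map_some, transfer_transfer hi.symm]
      rfl
  simp only [transfer_zero] at hlow hhigh
  erw [hlow, Option.bind_some, hhigh]
  rfl

end Tensor

theorem negIdx_natCast_succ {n k : ℕ} (h : k < n) :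
    negIdx n ((k + 1 : ℕ) : ℤ) = ⟨n - k, by omega⟩ := by
  ext
  show ((-((k + 1 : ℕ) : ℤ)) % ((n : ℤ) + 1)).toNat = n - k
  rw [← Int.add_mul_emod_self_left (-((k + 1 : ℕ) : ℤ)) ((n : ℤ) + 1) 1,
    Int.emod_eq_of_lt (by omega) (by omega)]
  omega

section Raising

variable {n : ℕ}

/-- The state reached from `y ⊗ v` after `ẽ^max` at `n, n - 1, …, i + 1`. The last condition
makes the next `ẽ^max_i` first drain the right factor down to `y (i - 1)` and then empty the
left factor at `i`. -/
def RaisedAbove (y : Fin (n + 1) → ℕ) (i : Fin (n + 1))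
    (p : (Fin (n + 1) → ℕ) × (Fin (n + 1) → ℕ)) : Prop :=
  (∀ j < i, p.1 j = y j) ∧ (∀ j, i < j → p.2 j = y (j - 1)) ∧ ∑ j ∈ Finset.Iio i, y j ≤ p.2 i

theorem raisedAbove_last {y v : Fin (n + 1) → ℕ}
    (h : ∑ j ∈ Finset.Iio (Fin.last n), y j ≤ v (Fin.last n)) :
    RaisedAbove y (Fin.last n) (y, v) :=
  ⟨fun _ _ => rfl, fun j hj => absurd hj (Fin.le_last j).not_gt, h⟩

theorem RaisedAbove.eMax {y : Fin (n + 1) → ℕ} {i : Fin (n + 1)} {x w : Fin (n + 1) → ℕ}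
    (h : RaisedAbove y i (x, w)) (hi : i ≠ 0) :
    ∃ p, ((BA n).tensor (BA n)).eMax i ((x, w) : (Fin (n + 1) → ℕ) × (Fin (n + 1) → ℕ)) =
      some p ∧ RaisedAbove y (i - 1) p := by
  obtain ⟨hx, hw, hsum⟩ := h
  dsimp only at hx hw hsum
  have hval : ((i - 1 : Fin (n + 1)) : ℕ) = i - 1 := Fin.val_sub_one_of_ne_zero hi
  have hpos : 0 < i := Fin.pos_iff_ne_zero.mpr hi
  have hlt : i - 1 < i := by rw [Fin.lt_def]; omega
  have hne : i - 1 ≠ i := hlt.ne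
  have hxy : x (i - 1) = y (i - 1) := hx _ hlt
  have hsplit : ∑ j ∈ Finset.Iio i, y j = ∑ j ∈ Finset.Iio (i - 1), y j + y (i - 1) := by
    rw [← Fin.Iic_sub_one_eq_Iio hpos, Finset.Iic_eq_cons_Iio, Finset.sum_cons, add_comm]
  refine ⟨_, eMax_tensor_BA i x w hne (by omega), fun j hj => ?_, fun j hj => ?_, ?_⟩ <;>
    dsimp only
  · rw [transfer_apply_of_ne (hj.trans hlt).ne hj.ne]
    exact hx j (hj.trans hlt)
  · have : j = i ∨ i < j := by rw [Fin.lt_def] at hj ⊢; rw [Fin.ext_iff]; omega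
    rcases this with rfl | hij
    · simp only [transfer_apply_self]
      omega
    · rw [transfer_apply_of_ne hij.ne' (hlt.trans hij).ne']
      exact hw j hij
  · simp only [transfer_apply_right hne.symm]
    omega

theorem RaisedAbove.tA_shiftA {y : Fin (n + 1) → ℕ} {p : (Fin (n + 1) → ℕ) × (Fin (n + 1) → ℕ)}
    (h : RaisedAbove y 0 p) : tA n (shiftA n p.2) = tA n y := by
  funext m
  have hlast : (⟨n - 1 - m, by omega⟩ : Fin (n + 1)) < Fin.last n := by
    show n - 1 - (m : ℕ) < n; omega
  show p.2 (⟨n - 1 - m, _⟩ + 1) = y ⟨n - 1 - m, _⟩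
  rw [h.2.1 _ (by rw [Fin.lt_def, Fin.val_add_one_of_lt hlast]; exact Nat.succ_pos _),
    add_sub_cancel_right]

theorem ChainOpt_eMax_raisedAbove {y v : Fin (n + 1) → ℕ}
    (h : RaisedAbove y (Fin.last n) (y, v)) (k : ℕ) (hk : k ≤ n) :
    ∃ p, ChainOpt (fun k => ((BA n).tensor (BA n)).eMax (negIdx n k)) k (y, v) = some p ∧
      RaisedAbove y ⟨n - k, by omega⟩ p := by
  induction k with
  | zero => exact ⟨_, rfl, h⟩
  | succ k ih =>
    obtain ⟨⟨x, w⟩, hp, hinv⟩ := ih (by omega)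
    have hi : (⟨n - k, by omega⟩ : Fin (n + 1)) ≠ 0 := Fin.ne_of_val_ne (by show n - k ≠ 0; omega)
    obtain ⟨p, hstep, hinv'⟩ := hinv.eMax hi
    refine ⟨p, ?_, ?_⟩
    · erw [ChainOpt_succ, hp, Option.bind_some, negIdx_natCast_succ (by omega)]
      exact hstep
    · have hpred : (⟨n - (k + 1), by omega⟩ : Fin (n + 1)) = ⟨n - k, by omega⟩ - 1 := by
        ext
        rw [Fin.val_sub_one_of_ne_zero hi]
        simp only
        omega
      rw [hpred]
      exact hinv'

end Raising

/-- Lemma 3.5 for type `A_n^{(1)}`: there is a constant `C` such that for every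
`M ≥ 1` and every `y ⊗ v ∈ B_l ⊗ B_M` with `v_{n+1} ≥ v_b + C` for all `1 ≤ b ≤ n`
(membership in `B_M[a_0]`, `a_0 = n+1`), setting
`y^{(k)} ⊗ v^{(k)} = ẽ^max_{i_k} ⋯ ẽ^max_{i_1}(y ⊗ v)` (`i_k ≡ -k (mod n+1)`),
one has `t(σ v^{(n)}) = t(y)`, where `σ` is the cyclic shift and
`t(x_1,…,x_{n+1}) = (x_n, …, x_1)`. -/
theorem stmt14 (n l : ℕ) (hn : 1 ≤ n) :
    ∃ Cst : ℕ, ∀ M : ℕ, 1 ≤ M →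
      ∀ y v : Fin (n + 1) → ℕ, ∑ j, y j = l → ∑ j, v j = M →
      (∀ b : Fin (n + 1), (b : ℕ) < n → v b + Cst ≤ v ⟨n, by omega⟩) →
      ∃ p : (Fin (n + 1) → ℕ) × (Fin (n + 1) → ℕ),
        ChainOpt (fun k => ((BA n).tensor (BA n)).eMax (negIdx n k)) n (y, v)
          = some p ∧
        tA n (shiftA n p.2) = tA n y := by
  refine ⟨l, fun M _ y v hy _ hv => ?_⟩
  have hbound : ∑ j ∈ Finset.Iio (Fin.last n), y j ≤ v (Fin.last n) :=
    calc ∑ j ∈ Finset.Iio (Fin.last n), y j ≤ ∑ j, y j :=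
          Finset.sum_le_sum_of_subset (Finset.subset_univ _)
      _ ≤ v 0 + l := by omega
      _ ≤ v (Fin.last n) := hv 0 hn
  obtain ⟨p, hp, hinv⟩ := ChainOpt_eMax_raisedAbove (raisedAbove_last hbound) n le_rfl
  simp only [Nat.sub_self, Fin.mk_zero] at hinv
  exact ⟨p, hp, hinv.tA_shiftA⟩
end

section
/- Fix an integer n ≥ 1, an index i ∈ {0,1,…,n}, an integer N ≥ 1, integers l_1,…,l_N ≥ 1, a nonnegative integer s_0, and elements b_j ∈ B_{l_j} for 1 ≤ j ≤ N. Define recursively, for 1 ≤ j ≤ N, b'_j = ẽ_i^{max(ε_i(b_j) − s_{j−1}, 0)} b_j and s_j = φ_i(b_j) + max(s_{j−1} − ε_i(b_j), 0). Then b'_1 ⊗ ⋯ ⊗ b'_N = ẽ_i^{max(ε_i(b_1 ⊗ ⋯ ⊗ b_N) − s_0, 0)} (b_1 ⊗ ⋯ ⊗ b_N), where the operator on the right is the tensor product operator ẽ_i on B_{l_1} ⊗ ⋯ ⊗ B_{l_N}. -/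
section OptIter

variable {α : Type} {g : α → Option α}

lemma optIter_succ (g : α → Option α) (m : ℕ) (a : α) :
    OptIter g (m + 1) a = (g a).bind (OptIter g m) := rfl

lemma optIter_one (g : α → Option α) (a : α) : OptIter g 1 a = g a := by
  cases h : g a <;> simp [OptIter, h]

lemma optIter_succ_of_eq_some {a b : α} (h : g a = some b) (m : ℕ) :
    OptIter g (m + 1) a = OptIter g m b := by
  simp [OptIter, h]

lemma optIter_succ_of_eq_none {a : α} (h : g a = none) (m : ℕ) :
    OptIter g (m + 1) a = none := by
  simp [OptIter, h]

end OptIter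

lemma add_one_eq_of_forall_le_iff {a b : ℕ} (h : ∀ m, m ≤ a ↔ m + 1 ≤ b) : a + 1 = b := by
  have h₁ := (h a).mp le_rfl
  have h₂ := (h 0).mp (Nat.zero_le a)
  have h₃ := (h (b - 1)).mpr (by omega)
  omega

namespace PreCrystal

variable {n : ℕ} {C D : PreCrystal n} {i : Fin (n + 1)}

lemma eps_eq_of_forall (b : C.carrier) {E : ℕ}
    (h : ∀ m, OptIter (C.e i) m b ≠ none ↔ m ≤ E) : C.eps i b = E := by
  rw [eps, Set.ext h]
  exact csSup_Iic

lemma phi_eq_of_forall (b : C.carrier) {E : ℕ}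
    (h : ∀ m, OptIter (C.f i) m b ≠ none ↔ m ≤ E) : C.phi i b = E := by
  rw [phi, Set.ext h]
  exact csSup_Iic

structure IsSeminormalAt (C : PreCrystal n) (i : Fin (n + 1)) : Prop where
  optIter_e_ne_none_iff : ∀ b m, OptIter (C.e i) m b ≠ none ↔ m ≤ C.eps i b
  optIter_f_ne_none_iff : ∀ b m, OptIter (C.f i) m b ≠ none ↔ m ≤ C.phi i b
  e_eq_some_iff : ∀ b b', C.e i b = some b' ↔ C.f i b' = some b

namespace IsSeminormalAt

lemma e_ne_none_iff (hC : C.IsSeminormalAt i) (b : C.carrier) :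
    C.e i b ≠ none ↔ 1 ≤ C.eps i b := by
  rw [← optIter_one (C.e i), hC.optIter_e_ne_none_iff]

lemma f_ne_none_iff (hC : C.IsSeminormalAt i) (b : C.carrier) :
    C.f i b ≠ none ↔ 1 ≤ C.phi i b := by
  rw [← optIter_one (C.f i), hC.optIter_f_ne_none_iff]

lemma eps_add_one_of_e_eq_some (hC : C.IsSeminormalAt i) {b b' : C.carrier}
    (h : C.e i b = some b') :
    C.eps i b' + 1 = C.eps i b :=
  add_one_eq_of_forall_le_iff fun m => by
    rw [← hC.optIter_e_ne_none_iff, ← hC.optIter_e_ne_none_iff, optIter_succ_of_eq_some h]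

lemma phi_add_one_of_f_eq_some (hC : C.IsSeminormalAt i) {b b' : C.carrier}
    (h : C.f i b = some b') :
    C.phi i b' + 1 = C.phi i b :=
  add_one_eq_of_forall_le_iff fun m => by
    rw [← hC.optIter_f_ne_none_iff, ← hC.optIter_f_ne_none_iff, optIter_succ_of_eq_some h]

lemma phi_of_e_eq_some (hC : C.IsSeminormalAt i) {b b' : C.carrier} (h : C.e i b = some b') :
    C.phi i b' = C.phi i b + 1 :=
  (hC.phi_add_one_of_f_eq_some ((hC.e_eq_some_iff b b').mp h)).symm

lemma eps_of_f_eq_some (hC : C.IsSeminormalAt i) {b b' : C.carrier} (h : C.f i b = some b') :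
    C.eps i b' = C.eps i b + 1 :=
  (hC.eps_add_one_of_e_eq_some ((hC.e_eq_some_iff b' b).mpr h)).symm

end IsSeminormalAt

-- `b₁ ⊗ b₂`, typed in `C.tensor D` so that rewriting never has to unfold `tensor`.
def tensorMk (p₁ : C.carrier) (p₂ : D.carrier) : (C.tensor D).carrier := (p₁, p₂)

@[simp]
lemma tensorMk_inj {p₁ q₁ : C.carrier} {p₂ q₂ : D.carrier} :
    tensorMk p₁ p₂ = tensorMk q₁ q₂ ↔ p₁ = q₁ ∧ p₂ = q₂ :=
  Prod.mk_inj

lemma tensor_e_tensorMk (p₁ : C.carrier) (p₂ : D.carrier) :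
    (C.tensor D).e i (tensorMk p₁ p₂) =
      if D.eps i p₂ ≤ C.phi i p₁ then (C.e i p₁).map (tensorMk · p₂)
      else (D.e i p₂).map (tensorMk p₁ ·) :=
  rfl

lemma tensor_f_tensorMk (p₁ : C.carrier) (p₂ : D.carrier) :
    (C.tensor D).f i (tensorMk p₁ p₂) =
      if D.eps i p₂ < C.phi i p₁ then (C.f i p₁).map (tensorMk · p₂)
      else (D.f i p₂).map (tensorMk p₁ ·) :=
  rfl

lemma tensor_e_tensorMk_eq_some_iff (p₁ q₁ : C.carrier) (p₂ q₂ : D.carrier) :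
    (C.tensor D).e i (tensorMk p₁ p₂) = some (tensorMk q₁ q₂) ↔
      D.eps i p₂ ≤ C.phi i p₁ ∧ C.e i p₁ = some q₁ ∧ q₂ = p₂ ∨
      C.phi i p₁ < D.eps i p₂ ∧ D.e i p₂ = some q₂ ∧ q₁ = p₁ := by
  rw [tensor_e_tensorMk]
  split_ifs with hc
  · cases C.e i p₁ <;> simp [hc, not_lt.mpr hc, and_comm, eq_comm]
  · cases D.e i p₂ <;> simp [hc, lt_of_not_ge hc, and_comm, eq_comm]

lemma tensor_f_tensorMk_eq_some_iff (p₁ q₁ : C.carrier) (p₂ q₂ : D.carrier) :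
    (C.tensor D).f i (tensorMk p₁ p₂) = some (tensorMk q₁ q₂) ↔
      D.eps i p₂ < C.phi i p₁ ∧ C.f i p₁ = some q₁ ∧ q₂ = p₂ ∨
      C.phi i p₁ ≤ D.eps i p₂ ∧ D.f i p₂ = some q₂ ∧ q₁ = p₁ := by
  rw [tensor_f_tensorMk]
  split_ifs with hc
  · cases C.f i p₁ <;> simp [hc, not_le.mpr hc, and_comm, eq_comm]
  · cases D.f i p₂ <;> simp [hc, le_of_not_gt hc, and_comm, eq_comm]

lemma optIter_tensor_e (hC : C.IsSeminormalAt i) (hD : D.IsSeminormalAt i) (m : ℕ)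
    (p₁ : C.carrier) (p₂ : D.carrier) :
    OptIter ((C.tensor D).e i) m (tensorMk p₁ p₂) =
      Option.map₂ tensorMk (OptIter (C.e i) (m - (D.eps i p₂ - C.phi i p₁)) p₁)
        (OptIter (D.e i) (min m (D.eps i p₂ - C.phi i p₁)) p₂) := by
  induction m generalizing p₁ p₂ with
  | zero => simp [OptIter]
  | succ m ih =>
    rw [optIter_succ, tensor_e_tensorMk]
    split_ifs with hc
    · rw [show D.eps i p₂ - C.phi i p₁ = 0 by omega]
      rcases h₁ : C.e i p₁ with _ | q₁
      · simp [optIter_succ_of_eq_none h₁]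
      · have hk : D.eps i p₂ - C.phi i q₁ = 0 := by rw [hC.phi_of_e_eq_some h₁]; omega
        simp [ih, hk, optIter_succ_of_eq_some h₁]
    · obtain ⟨q₂, h₂⟩ :=
        Option.ne_none_iff_exists'.mp ((hD.e_ne_none_iff p₂).mpr (by omega))
      have hq₂ := hD.eps_add_one_of_e_eq_some h₂
      have e₁ : m + 1 - (D.eps i p₂ - C.phi i p₁) = m - (D.eps i q₂ - C.phi i p₁) := by
        omega
      have e₂ : min (m + 1) (D.eps i p₂ - C.phi i p₁) =
          min m (D.eps i q₂ - C.phi i p₁) + 1 := by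
        omega
      rw [h₂, Option.map_some, Option.bind_some, ih, e₁, e₂, optIter_succ_of_eq_some h₂]

lemma optIter_tensor_f (hC : C.IsSeminormalAt i) (hD : D.IsSeminormalAt i) (m : ℕ)
    (p₁ : C.carrier) (p₂ : D.carrier) :
    OptIter ((C.tensor D).f i) m (tensorMk p₁ p₂) =
      Option.map₂ tensorMk (OptIter (C.f i) (min m (C.phi i p₁ - D.eps i p₂)) p₁)
        (OptIter (D.f i) (m - (C.phi i p₁ - D.eps i p₂)) p₂) := by
  induction m generalizing p₁ p₂ with
  | zero => simp [OptIter]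
  | succ m ih =>
    rw [optIter_succ, tensor_f_tensorMk]
    split_ifs with hc
    · obtain ⟨q₁, h₁⟩ :=
        Option.ne_none_iff_exists'.mp ((hC.f_ne_none_iff p₁).mpr (by omega))
      have hq₁ := hC.phi_add_one_of_f_eq_some h₁
      have e₁ : min (m + 1) (C.phi i p₁ - D.eps i p₂) =
          min m (C.phi i q₁ - D.eps i p₂) + 1 := by
        omega
      have e₂ : m + 1 - (C.phi i p₁ - D.eps i p₂) = m - (C.phi i q₁ - D.eps i p₂) := by
        omega
      rw [h₁, Option.map_some, Option.bind_some, ih, e₁, e₂, optIter_succ_of_eq_some h₁]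
    · rw [show C.phi i p₁ - D.eps i p₂ = 0 by omega]
      rcases h₂ : D.f i p₂ with _ | q₂
      · simp [optIter_succ_of_eq_none h₂]
      · have hk : C.phi i p₁ - D.eps i q₂ = 0 := by rw [hD.eps_of_f_eq_some h₂]; omega
        simp [ih, hk, optIter_succ_of_eq_some h₂]

lemma optIter_tensor_e_ne_none_iff (hC : C.IsSeminormalAt i) (hD : D.IsSeminormalAt i)
    (m : ℕ) (p₁ : C.carrier) (p₂ : D.carrier) :
    OptIter ((C.tensor D).e i) m (tensorMk p₁ p₂) ≠ none ↔
      m ≤ C.eps i p₁ + (D.eps i p₂ - C.phi i p₁) := by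
  rw [optIter_tensor_e hC hD, ne_eq, Option.map₂_eq_none_iff, not_or, ← ne_eq, ← ne_eq,
    hC.optIter_e_ne_none_iff, hD.optIter_e_ne_none_iff]
  omega

lemma optIter_tensor_f_ne_none_iff (hC : C.IsSeminormalAt i) (hD : D.IsSeminormalAt i)
    (m : ℕ) (p₁ : C.carrier) (p₂ : D.carrier) :
    OptIter ((C.tensor D).f i) m (tensorMk p₁ p₂) ≠ none ↔
      m ≤ D.phi i p₂ + (C.phi i p₁ - D.eps i p₂) := by
  rw [optIter_tensor_f hC hD, ne_eq, Option.map₂_eq_none_iff, not_or, ← ne_eq, ← ne_eq,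
    hC.optIter_f_ne_none_iff, hD.optIter_f_ne_none_iff]
  omega

lemma tensor_eps (hC : C.IsSeminormalAt i) (hD : D.IsSeminormalAt i)
    (p₁ : C.carrier) (p₂ : D.carrier) :
    (C.tensor D).eps i (tensorMk p₁ p₂) = C.eps i p₁ + (D.eps i p₂ - C.phi i p₁) :=
  eps_eq_of_forall _ (optIter_tensor_e_ne_none_iff hC hD · p₁ p₂)

lemma tensor_phi (hC : C.IsSeminormalAt i) (hD : D.IsSeminormalAt i)
    (p₁ : C.carrier) (p₂ : D.carrier) :
    (C.tensor D).phi i (tensorMk p₁ p₂) = D.phi i p₂ + (C.phi i p₁ - D.eps i p₂) :=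
  phi_eq_of_forall _ (optIter_tensor_f_ne_none_iff hC hD · p₁ p₂)

lemma IsSeminormalAt.tensor (hC : C.IsSeminormalAt i) (hD : D.IsSeminormalAt i) :
    (C.tensor D).IsSeminormalAt i where
  optIter_e_ne_none_iff := fun ⟨p₁, p₂⟩ m => by
    have h := optIter_tensor_e_ne_none_iff hC hD m p₁ p₂
    rw [← tensor_eps hC hD] at h
    exact h
  optIter_f_ne_none_iff := fun ⟨p₁, p₂⟩ m => by
    have h := optIter_tensor_f_ne_none_iff hC hD m p₁ p₂
    rw [← tensor_phi hC hD] at h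
    exact h
  e_eq_some_iff := by
    rintro ⟨p₁, p₂⟩ ⟨q₁, q₂⟩
    show (C.tensor D).e i (tensorMk p₁ p₂) = some (tensorMk q₁ q₂) ↔
      (C.tensor D).f i (tensorMk q₁ q₂) = some (tensorMk p₁ p₂)
    rw [tensor_e_tensorMk_eq_some_iff, tensor_f_tensorMk_eq_some_iff]
    constructor
    · rintro (⟨hc, h₁, rfl⟩ | ⟨hc, h₂, rfl⟩)
      · refine .inl ⟨?_, (hC.e_eq_some_iff _ _).mp h₁, rfl⟩
        rw [hC.phi_of_e_eq_some h₁]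
        omega
      · have := hD.eps_add_one_of_e_eq_some h₂
        exact .inr ⟨by omega, (hD.e_eq_some_iff _ _).mp h₂, rfl⟩
    · rintro (⟨hc, h₁, rfl⟩ | ⟨hc, h₂, rfl⟩)
      · have := hC.phi_add_one_of_f_eq_some h₁
        exact .inl ⟨by omega, (hC.e_eq_some_iff _ _).mpr h₁, rfl⟩
      · refine .inr ⟨?_, (hD.e_eq_some_iff _ _).mpr h₂, rfl⟩
        rw [hD.eps_of_f_eq_some h₂]
        omega

lemma optIter_tensor_e_eps_sub (hC : C.IsSeminormalAt i) (hD : D.IsSeminormalAt i)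
    (p₁ : C.carrier) (p₂ : D.carrier) (s : ℕ) :
    OptIter ((C.tensor D).e i) ((C.tensor D).eps i (tensorMk p₁ p₂) - s) (tensorMk p₁ p₂) =
      Option.map₂ tensorMk (OptIter (C.e i) (C.eps i p₁ - s) p₁)
        (OptIter (D.e i) (D.eps i p₂ - (C.phi i p₁ + (s - C.eps i p₁))) p₂) := by
  rw [optIter_tensor_e hC hD, tensor_eps hC hD]
  congr 2 <;> omega

lemma tensor_phi_add_sub_eps (hC : C.IsSeminormalAt i) (hD : D.IsSeminormalAt i)
    (p₁ : C.carrier) (p₂ : D.carrier) (s : ℕ) :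
    (C.tensor D).phi i (tensorMk p₁ p₂) + (s - (C.tensor D).eps i (tensorMk p₁ p₂)) =
      D.phi i p₂ + (C.phi i p₁ + (s - C.eps i p₁) - D.eps i p₂) := by
  rw [tensor_phi hC hD, tensor_eps hC hD]
  omega

end PreCrystal

section TypeA

open Function

variable {n : ℕ} {i : Fin (n + 1)}

lemma Fin.sub_one_ne_self (hn : 1 ≤ n) (i : Fin (n + 1)) : i - 1 ≠ i := by
  intro h
  have := Fin.one_eq_zero_iff.mp (sub_eq_self.mp h)
  omega

lemma eA_of_pos {x : Fin (n + 1) → ℕ} (hx : 0 < x i) :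
    eA n i x = some (update (update x (i - 1) (x (i - 1) + 1)) i (x i - 1)) :=
  if_pos hx

lemma fA_of_pos {x : Fin (n + 1) → ℕ} (hx : 0 < x (i - 1)) :
    fA n i x = some (update (update x i (x i + 1)) (i - 1) (x (i - 1) - 1)) :=
  if_pos hx

lemma eA_eq_some_iff (hi : i - 1 ≠ i) (x y : Fin (n + 1) → ℕ) :
    eA n i x = some y ↔ fA n i y = some x := by
  constructor
  · intro h
    by_cases hx : 0 < x i
    · rw [eA_of_pos hx, Option.some_inj] at h
      subst h
      rw [fA_of_pos (by simp [hi]), Option.some_inj]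
      ext j
      rcases eq_or_ne j i with rfl | hji
      · simp [hi.symm, Nat.sub_add_cancel hx]
      rcases eq_or_ne j (i - 1) with rfl | hji'
      · simp [hi]
      · simp [hji, hji']
    · simp [eA, hx] at h
  · intro h
    by_cases hy : 0 < y (i - 1)
    · rw [fA_of_pos hy, Option.some_inj] at h
      subst h
      rw [eA_of_pos (by simp [hi.symm]), Option.some_inj]
      ext j
      rcases eq_or_ne j i with rfl | hji
      · simp [hi.symm]
      rcases eq_or_ne j (i - 1) with rfl | hji'
      · simp [hi, Nat.sub_add_cancel hy]
      · simp [hji, hji']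
    · simp [fA, hy] at h

lemma optIter_eA_ne_none_iff (m : ℕ) (x : Fin (n + 1) → ℕ) :
    OptIter (eA n i) m x ≠ none ↔ m ≤ x i := by
  induction m generalizing x with
  | zero => simp [OptIter]
  | succ m ih =>
    by_cases hx : 0 < x i
    · rw [optIter_succ_of_eq_some (eA_of_pos hx), ih, update_self]
      omega
    · rw [optIter_succ_of_eq_none (if_neg hx : eA n i x = none)]
      simp only [ne_eq, not_true_eq_false, false_iff, not_le]
      omega

lemma optIter_fA_ne_none_iff (m : ℕ) (x : Fin (n + 1) → ℕ) :
    OptIter (fA n i) m x ≠ none ↔ m ≤ x (i - 1) := by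
  induction m generalizing x with
  | zero => simp [OptIter]
  | succ m ih =>
    by_cases hx : 0 < x (i - 1)
    · rw [optIter_succ_of_eq_some (fA_of_pos hx), ih, update_self]
      omega
    · rw [optIter_succ_of_eq_none (if_neg hx : fA n i x = none)]
      simp only [ne_eq, not_true_eq_false, false_iff, not_le]
      omega

end TypeA

section TensorPower

open PreCrystal

variable {n : ℕ} {i : Fin (n + 1)}

lemma BA_eps (x : (BA n).carrier) : (BA n).eps i x = x i :=
  eps_eq_of_forall x (optIter_eA_ne_none_iff · x)

lemma BA_phi (x : (BA n).carrier) : (BA n).phi i x = x (i - 1) :=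
  phi_eq_of_forall x (optIter_fA_ne_none_iff · x)

lemma isSeminormalAt_BA (hn : 1 ≤ n) (i : Fin (n + 1)) : (BA n).IsSeminormalAt i where
  optIter_e_ne_none_iff x m := by rw [BA_eps]; exact optIter_eA_ne_none_iff m x
  optIter_f_ne_none_iff x m := by rw [BA_phi]; exact optIter_fA_ne_none_iff m x
  e_eq_some_iff := eA_eq_some_iff (Fin.sub_one_ne_self hn i)

lemma isSeminormalAt_BPow (hn : 1 ≤ n) (i : Fin (n + 1)) :
    ∀ N, (BPow n N).IsSeminormalAt i
  | 0 => isSeminormalAt_BA hn i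
  | N + 1 => (isSeminormalAt_BPow hn i N).tensor (isSeminormalAt_BA hn i)

lemma s_succ_eq_phi_tensorOf (hn : 1 ≤ n) (N : ℕ) (s : ℕ → ℕ)
    (b : Fin (N + 1) → Fin (n + 1) → ℕ)
    (hs : ∀ j : Fin (N + 1), s (j + 1) = (BA n).phi i (b j) + (s j - (BA n).eps i (b j))) :
    s (N + 1) =
      (BPow n N).phi i (tensorOf n N b) + (s 0 - (BPow n N).eps i (tensorOf n N b)) := by
  induction N with
  | zero => exact hs 0
  | succ N ih =>
    have hlast := hs (Fin.last (N + 1))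
    rw [Fin.val_last, ih (fun j => b j.castSucc) fun j => hs j.castSucc] at hlast
    rw [hlast]
    exact (tensor_phi_add_sub_eps (isSeminormalAt_BPow hn i N) (isSeminormalAt_BA hn i)
      _ _ _).symm

end TensorPower

theorem stmt16_general (n N' : ℕ) (hn : 1 ≤ n) (i : Fin (n + 1))
    (s : ℕ → ℕ)
    (b b' : Fin (N' + 1) → (Fin (n + 1) → ℕ))
    (hb' : ∀ j : Fin (N' + 1),
      OptIter ((BA n).e i) ((BA n).eps i (b j) - s (j : ℕ)) (b j) = some (b' j))
    (hs : ∀ j : Fin (N' + 1),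
      s ((j : ℕ) + 1) = (BA n).phi i (b j) + (s (j : ℕ) - (BA n).eps i (b j))) :
    OptIter ((BPow n N').e i)
      ((BPow n N').eps i (tensorOf n N' b) - s 0) (tensorOf n N' b)
      = some (tensorOf n N' b') := by
  induction N' with
  | zero => exact hb' 0
  | succ N ih =>
    have hlast := hb' (Fin.last (N + 1))
    rw [Fin.val_last, s_succ_eq_phi_tensorOf hn N s _ fun j => hs j.castSucc] at hlast
    have key := PreCrystal.optIter_tensor_e_eps_sub (isSeminormalAt_BPow hn i N)
      (isSeminormalAt_BA hn i) (tensorOf n N fun j => b j.castSucc) (b (Fin.last (N + 1))) (s 0)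
    rw [ih _ (fun j => b' j.castSucc) (fun j => hb' j.castSucc) fun j => hs j.castSucc,
      hlast] at key
    -- `key` is the goal with `BPow n (N + 1)` and `tensorOf n (N + 1)` unfolded
    exact key

/-- Equation (3.8) (vertex-diagram recursion) for type `A_n^{(1)}`: given
`s_0 ≥ 0` and `b_j ∈ B_{l_j}` (`1 ≤ j ≤ N`, here `N = N'+1`, zero-indexed by
`j : Fin (N'+1)`), define recursively `b'_j = ẽ_i^{(ε_i(b_j) - s_{j-1})_+} b_j` and
`s_j = φ_i(b_j) + (s_{j-1} - ε_i(b_j))_+`.  Then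
`b'_1 ⊗ ⋯ ⊗ b'_N = ẽ_i^{(ε_i(b_1 ⊗ ⋯ ⊗ b_N) - s_0)_+} (b_1 ⊗ ⋯ ⊗ b_N)`
in the tensor product crystal `B_{l_1} ⊗ ⋯ ⊗ B_{l_N}`. -/
theorem stmt16 (n N' : ℕ) (hn : 1 ≤ n) (i : Fin (n + 1))
    (l : Fin (N' + 1) → ℕ) (hl : ∀ j, 1 ≤ l j)
    (s : ℕ → ℕ)
    (b b' : Fin (N' + 1) → (Fin (n + 1) → ℕ))
    (hb : ∀ j, ∑ m, b j m = l j)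
    (hb' : ∀ j : Fin (N' + 1),
      OptIter ((BA n).e i) ((BA n).eps i (b j) - s (j : ℕ)) (b j) = some (b' j))
    (hs : ∀ j : Fin (N' + 1),
      s ((j : ℕ) + 1) = (BA n).phi i (b j) + (s (j : ℕ) - (BA n).eps i (b j))) :
    OptIter ((BPow n N').e i)
      ((BPow n N').eps i (tensorOf n N' b) - s 0) (tensorOf n N' b)
      = some (tensorOf n N' b') :=
  stmt16_general n N' hn i s b b' hb' hs
end
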